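/- Fix a positive integer n and r ∈ {2, …, n − 1}. Then for every sufficiently small a ∈ (0,1) and every σ > 0, there exists a convex, 1-smooth function f : ℝ^{n×n} → ℝ such that: (1) f admits a rank-r minimizer X* over the unit trace-norm ball for which #σ_1(∇f(X*)) = r + 1 and σ_1(∇f(X*)) − σ_{r+2}(∇f(X*)) = σ; and (2) there exists a matrix X_a with ‖X_a‖_* ≤ 1, rank(X_a) = r, ‖X_a − X*‖_F ≤ √2·a, and such that for every η ∈ (0,1], rank(𝒢_η(X_a)) = r + 1. -/

import Mathlib

/- Common definitions: Frobenius norm and inner product, singular values in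
non-increasing order, trace (nuclear) norm, multiplicity of the top singular
value, Euclidean projection onto the trace-norm ball, the spectrahedron and its
projection, sorted eigenvalues of symmetric matrices, best rank-`r`
approximations, and the singular-value soft-thresholding (prox) operator. -/

open scoped BigOperators
open Matrix MeasureTheory ProbabilityTheory

attribute [local instance] Matrix.normedAddCommGroup Matrix.normedSpace

noncomputable section

/-- Frobenius norm of a real matrix. -/
def frobNorm {m n : ℕ} (X : Matrix (Fin m) (Fin n) ℝ) : ℝ :=
  Real.sqrt (∑ i, ∑ j, (X i j) ^ 2)

/-- Frobenius inner product of two real matrices. -/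
def frobInner {m n : ℕ} (A B : Matrix (Fin m) (Fin n) ℝ) : ℝ :=
  ∑ i, ∑ j, A i j * B i j

/-- The continuous linear functional `H ↦ ⟨G, H⟩` (Frobenius inner product);
`HasFDerivAt f (frobCLM G) X` says that `G` is the gradient of `f` at `X`. -/
def frobCLM {m n : ℕ} (G : Matrix (Fin m) (Fin n) ℝ) :
    Matrix (Fin m) (Fin n) ℝ →L[ℝ] ℝ :=
  LinearMap.toContinuousLinearMap
    { toFun := fun H => frobInner G H
      map_add' := fun x y => by
        simp [frobInner, Matrix.add_apply, mul_add, Finset.sum_add_distrib]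
      map_smul' := fun c x => by
        simp [frobInner, Matrix.smul_apply, smul_eq_mul, Finset.mul_sum, mul_left_comm] }

/-- The non-increasing (descending) rearrangement of a finite tuple of reals. -/
def sortedDesc {N : ℕ} (f : Fin N → ℝ) : Fin N → ℝ :=
  fun i => f (Tuple.sort f i.rev)

/-- The singular values of a real `m × n` matrix in non-increasing order
(the square roots of the eigenvalues of `Xᵀ * X`), padded with zeros so that
there are `n` of them. -/
def svalsFin {m n : ℕ} (X : Matrix (Fin m) (Fin n) ℝ) : Fin n → ℝ :=
  sortedDesc (fun i => Real.sqrt ((show (Xᵀ * X).IsHermitian by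
    rw [Matrix.IsHermitian, Matrix.conjTranspose_eq_transpose_of_trivial]
    rw [Matrix.transpose_mul, Matrix.transpose_transpose]).eigenvalues i))

/-- `svalI X i` is the `(i+1)`-th largest singular value of `X` (i.e. `0`-indexed:
`svalI X 0 = σ₁(X)`), interpreted as `0` when the index is out of range. -/
def svalI {m n : ℕ} (X : Matrix (Fin m) (Fin n) ℝ) (i : ℕ) : ℝ :=
  if h : i < n then svalsFin X ⟨i, h⟩ else 0

/-- The trace norm (nuclear norm): the sum of the singular values. -/
def traceNorm {m n : ℕ} (X : Matrix (Fin m) (Fin n) ℝ) : ℝ :=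
  ∑ i, svalsFin X i

/-- `#σ₁(X)`: the multiplicity of the largest singular value of `X`. -/
def multTop {m n : ℕ} (X : Matrix (Fin m) (Fin n) ℝ) : ℕ :=
  Nat.card {i : Fin n // svalsFin X i = svalI X 0}

/-- `P` is the Euclidean (Frobenius) projection of `X` onto the trace-norm ball
of radius `τ`. -/
def IsTraceBallProj {m n : ℕ} (τ : ℝ) (X P : Matrix (Fin m) (Fin n) ℝ) : Prop :=
  traceNorm P ≤ τ ∧ ∀ Z, traceNorm Z ≤ τ → frobNorm (X - P) ≤ frobNorm (X - Z)

/-- The Euclidean projection onto the trace-norm ball of radius `τ`. -/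
def projTraceBall {m n : ℕ} (τ : ℝ) (X : Matrix (Fin m) (Fin n) ℝ) :
    Matrix (Fin m) (Fin n) ℝ :=
  open scoped Classical in
  if h : ∃ P, IsTraceBallProj τ X P then h.choose else 0

/-- `Y` is a best rank-`r` approximation of `X` in Frobenius norm. -/
def IsBestRankApprox {m n : ℕ} (r : ℕ) (X Y : Matrix (Fin m) (Fin n) ℝ) : Prop :=
  Y.rank ≤ r ∧ ∀ Z : Matrix (Fin m) (Fin n) ℝ, Z.rank ≤ r → frobNorm (X - Y) ≤ frobNorm (X - Z)

/-- The spectrahedron: positive semidefinite matrices of unit trace. -/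
def SpectraSet (n : ℕ) : Set (Matrix (Fin n) (Fin n) ℝ) :=
  {X | X.PosSemidef ∧ X.trace = 1}

/-- `P` is the Euclidean (Frobenius) projection of `X` onto the spectrahedron. -/
def IsSpectraProj {n : ℕ} (X P : Matrix (Fin n) (Fin n) ℝ) : Prop :=
  P ∈ SpectraSet n ∧ ∀ Z ∈ SpectraSet n, frobNorm (X - P) ≤ frobNorm (X - Z)

/-- The Euclidean projection onto the spectrahedron. -/
def projSpectra {n : ℕ} (X : Matrix (Fin n) (Fin n) ℝ) : Matrix (Fin n) (Fin n) ℝ :=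
  open scoped Classical in
  if h : ∃ P, IsSpectraProj X P then h.choose else 0

/-- `evalI X i` is the `(i+1)`-th largest eigenvalue of the symmetric matrix `X`
(`0`-indexed: `evalI X 0 = λ₁(X)`, `evalI X (n-1) = λ_n(X)`); junk value `0` if
`X` is not symmetric or the index is out of range. -/
def evalI {n : ℕ} (X : Matrix (Fin n) (Fin n) ℝ) (i : ℕ) : ℝ :=
  open scoped Classical in
  if h : i < n then
    (if hX : X.IsHermitian then sortedDesc hX.eigenvalues ⟨i, h⟩ else 0)
  else 0

/-- The multiplicity of the smallest eigenvalue of a symmetric matrix. -/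
def multMinEig {n : ℕ} (X : Matrix (Fin n) (Fin n) ℝ) : ℕ :=
  Nat.card {i : Fin n // evalI X i = evalI X (n - 1)}

/-- `Y` is the value at `X` of the singular-value soft-thresholding operator
`𝒯_η`, characterized as the proximal mapping of `η‖·‖_*`:
the (unique) minimizer of `Z ↦ ½‖X − Z‖_F² + η‖Z‖_*`. -/
def IsSVT {m n : ℕ} (η : ℝ) (X Y : Matrix (Fin m) (Fin n) ℝ) : Prop :=
  ∀ Z : Matrix (Fin m) (Fin n) ℝ,
    frobNorm (X - Y) ^ 2 / 2 + η * traceNorm Y ≤ frobNorm (X - Z) ^ 2 / 2 + η * traceNorm Z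

/-- The singular-value soft-thresholding operator `𝒯_η`. -/
def softThresh {m n : ℕ} (η : ℝ) (X : Matrix (Fin m) (Fin n) ℝ) :
    Matrix (Fin m) (Fin n) ℝ :=
  open scoped Classical in
  if h : ∃ Y, IsSVT η X Y then h.choose else 0

instance {m n : ℕ} : MeasurableSpace (Matrix (Fin m) (Fin n) ℝ) :=
  inferInstanceAs (MeasurableSpace (Fin m → Fin n → ℝ))

end

/-!
The objective is linear, `f X = -⟪S, X⟫` with `S = σ • diag(1, …, 1, 0, …, 0)` (`r + 1` ones),
so its gradient `-S` is constant: `f` is convex and `1`-smooth, `σ₁(∇f) = σ` has multiplicity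
`r + 1` and `σ_{r+2}(∇f) = 0`. Every diagonal entry of `Z` is dominated by the trace norm, so
`|⟪D, Z⟫| ≤ max |Dᵢᵢ| · ‖Z‖_*` for diagonal `D`; hence `f ≥ -σ` on the unit trace-norm ball,
with equality at the rank-`r` matrix `X* = diag(1/r, …, 1/r, 0, …, 0)`. For `X_a = (1 - a) X*`
the gradient step is `diag((1 - a)/r + ησ, …, ησ, 0, …)`, and its projection onto the ball
lowers both levels by the same threshold `c = max 0 (ησ - a/(r + 1)) < ησ` (checked through the
variational inequality), so it keeps `r + 1` nonzero entries.
-/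

section Frobenius

variable {m n : ℕ}

theorem frobNorm_nonneg (X : Matrix (Fin m) (Fin n) ℝ) : 0 ≤ frobNorm X :=
  Real.sqrt_nonneg _

theorem frobInner_self (X : Matrix (Fin m) (Fin n) ℝ) : frobInner X X = frobNorm X ^ 2 := by
  rw [frobNorm, Real.sq_sqrt (by positivity)]
  simp only [frobInner, sq]

theorem frobNorm_eq_zero {X : Matrix (Fin m) (Fin n) ℝ} : frobNorm X = 0 ↔ X = 0 := by
  rw [frobNorm, Real.sqrt_eq_zero (by positivity),
    Fintype.sum_eq_zero_iff_of_nonneg fun i => by positivity, ← Matrix.ext_iff]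
  simp only [funext_iff, Matrix.zero_apply, Pi.zero_apply]
  refine forall_congr' fun i => ?_
  rw [Fintype.sum_eq_zero_iff_of_nonneg fun j => sq_nonneg (X i j)]
  simp [funext_iff]

theorem frobNorm_add_sq (A B : Matrix (Fin m) (Fin n) ℝ) :
    frobNorm (A + B) ^ 2 = frobNorm A ^ 2 + 2 * frobInner A B + frobNorm B ^ 2 := by
  simp only [← frobInner_self, frobInner, Matrix.add_apply, Finset.mul_sum,
    ← Finset.sum_add_distrib]
  exact Finset.sum_congr rfl fun i _ => Finset.sum_congr rfl fun j _ => by ring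

theorem frobInner_sub_right (A B C : Matrix (Fin m) (Fin n) ℝ) :
    frobInner A (B - C) = frobInner A B - frobInner A C :=
  (frobCLM A).map_sub B C

theorem frobInner_neg_left (A B : Matrix (Fin m) (Fin n) ℝ) :
    frobInner (-A) B = -frobInner A B := by
  simp [frobInner]

theorem projTraceBall_eq_of_frobInner_nonneg {τ : ℝ} {Y P : Matrix (Fin m) (Fin n) ℝ}
    (hP : traceNorm P ≤ τ) (hvi : ∀ Z, traceNorm Z ≤ τ → 0 ≤ frobInner (Y - P) (P - Z)) :
    projTraceBall τ Y = P := by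
  have pythagoras : ∀ Z, traceNorm Z ≤ τ →
      frobNorm (Y - P) ^ 2 + frobNorm (P - Z) ^ 2 ≤ frobNorm (Y - Z) ^ 2 := fun Z hZ => by
    have := frobNorm_add_sq (Y - P) (P - Z)
    rw [sub_add_sub_cancel] at this
    linarith [hvi Z hZ]
  have hex : ∃ Q, IsTraceBallProj τ Y Q := ⟨P, hP, fun Z hZ =>
    (pow_le_pow_iff_left₀ (frobNorm_nonneg _) (frobNorm_nonneg _) two_ne_zero).mp <| by
      nlinarith [pythagoras Z hZ]⟩
  obtain ⟨hQ, hQmin⟩ := hex.choose_spec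
  have hPQ : frobNorm (P - hex.choose) ^ 2 ≤ 0 := by
    nlinarith [pythagoras _ hQ, hQmin P hP, frobNorm_nonneg (Y - hex.choose)]
  rw [projTraceBall, dif_pos hex, ← sub_eq_zero, ← neg_sub, neg_eq_zero, ← frobNorm_eq_zero]
  nlinarith [frobNorm_nonneg (P - hex.choose)]

end Frobenius

section SingularValues

variable {m n N : ℕ}

theorem svalsFin_neg (X : Matrix (Fin m) (Fin n) ℝ) : svalsFin (-X) = svalsFin X := by
  unfold svalsFin
  congr! 4
  simp

theorem svalI_neg (X : Matrix (Fin m) (Fin n) ℝ) (i : ℕ) : svalI (-X) i = svalI X i := by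
  simp only [svalI, svalsFin_neg]

theorem multTop_neg (X : Matrix (Fin m) (Fin n) ℝ) : multTop (-X) = multTop X := by
  simp only [multTop, svalI_neg, svalsFin_neg]

theorem sortedDesc_antitone (f : Fin N → ℝ) : Antitone (sortedDesc f) :=
  fun _ _ hij => Tuple.monotone_sort f (Fin.rev_le_rev.mpr hij)

theorem map_univ_sortedDesc (f : Fin N → ℝ) :
    Multiset.map (sortedDesc f) Finset.univ.val = Multiset.map f Finset.univ.val := by
  change Multiset.map (f ∘ (Fin.revPerm.trans (Tuple.sort f))) _ = _
  rw [← Multiset.map_map, Multiset.map_univ_val_equiv]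

theorem sum_sortedDesc (f : Fin N → ℝ) : ∑ i, sortedDesc f i = ∑ i, f i := by
  rw [Finset.sum_eq_multiset_sum, map_univ_sortedDesc, ← Finset.sum_eq_multiset_sum]

theorem sortedDesc_eq_of_antitone {f g : Fin N → ℝ} (hg : Antitone g)
    (h : Multiset.map f Finset.univ.val = Multiset.map g Finset.univ.val) :
    sortedDesc f = g := by
  have hperm : (List.ofFn (sortedDesc f)).Perm (List.ofFn g) := by
    rw [← Multiset.coe_eq_coe, ← Fin.univ_val_map, ← Fin.univ_val_map, map_univ_sortedDesc, h]
  exact List.ofFn_injective <| hperm.eq_of_pairwise' (r := (· ≥ ·))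
    (List.pairwise_ofFn.mpr fun _ _ hij => sortedDesc_antitone f hij.le)
    (List.pairwise_ofFn.mpr fun _ _ hij => hg hij.le)

theorem map_univ_eigenvalues_of_eq_diagonal {A : Matrix (Fin N) (Fin N) ℝ} (hA : A.IsHermitian)
    {d : Fin N → ℝ} (h : A = diagonal d) :
    Multiset.map hA.eigenvalues Finset.univ.val = Multiset.map d Finset.univ.val := by
  subst h
  have := hA.roots_charpoly_eq_eigenvalues
  rw [charpoly_diagonal, Polynomial.roots_prod _ _
    (Finset.prod_ne_zero_iff.mpr fun i _ => Polynomial.X_sub_C_ne_zero _)] at this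
  simpa using this.symm

theorem svalsFin_diagonal {d : Fin N → ℝ} (hd : Antitone fun i => |d i|) :
    svalsFin (diagonal d) = fun i => |d i| := by
  refine sortedDesc_eq_of_antitone hd ?_
  have hDD : (diagonal d)ᵀ * diagonal d = diagonal fun i => d i ^ 2 := by
    rw [diagonal_transpose, diagonal_mul_diagonal]; simp only [sq]
  change Multiset.map (Real.sqrt ∘ _) _ = _
  rw [← Multiset.map_map Real.sqrt, map_univ_eigenvalues_of_eq_diagonal _ hDD, Multiset.map_map]
  simp [Real.sqrt_sq_eq_abs]

end SingularValues

section DiagonalDuality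

variable {N : ℕ}

theorem sum_abs_diag_le_sum_sqrt {Z W U : Matrix (Fin N) (Fin N) ℝ} (hZ : Z = W * Uᵀ)
    (hU : Uᵀ * U = 1) : ∑ i, |Z i i| ≤ ∑ k, √((Wᵀ * W) k k) := by
  have hUcol : ∀ k, ∑ i, U i k ^ 2 = 1 := fun k => by
    simpa [mul_apply, sq] using congr_fun (congr_fun hU k) k
  calc ∑ i, |Z i i| = ∑ i, |∑ k, W i k * U i k| := by simp [hZ, mul_apply]
    _ ≤ ∑ i, ∑ k, |W i k| * |U i k| := Finset.sum_le_sum fun i _ =>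
        (Finset.abs_sum_le_sum_abs _ _).trans_eq (by simp only [abs_mul])
    _ = ∑ k, ∑ i, |W i k| * |U i k| := Finset.sum_comm
    _ ≤ ∑ k, √(∑ i, |W i k| ^ 2) * √(∑ i, |U i k| ^ 2) :=
        Finset.sum_le_sum fun k _ => Real.sum_mul_le_sqrt_mul_sqrt _ _ _
    _ = ∑ k, √((Wᵀ * W) k k) := by
        simp only [sq_abs, hUcol, Real.sqrt_one, mul_one]
        simp only [mul_apply, transpose_apply, sq]

theorem sum_abs_diag_le_traceNorm (Z : Matrix (Fin N) (Fin N) ℝ) :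
    ∑ i, |Z i i| ≤ traceNorm Z := by
  have hA : (Zᵀ * Z).IsHermitian := (posSemidef_conjTranspose_mul_self Z).isHermitian
  set U : Matrix (Fin N) (Fin N) ℝ := (hA.eigenvectorUnitary : Matrix (Fin N) (Fin N) ℝ)
  have hU : Uᵀ * U = 1 := Unitary.coe_star_mul_self hA.eigenvectorUnitary
  have hU' : U * Uᵀ = 1 := Unitary.coe_mul_star_self hA.eigenvectorUnitary
  have hdiag : (Z * U)ᵀ * (Z * U) = diagonal hA.eigenvalues := by
    have h := hA.conjStarAlgAut_star_eigenvectorUnitary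
    simp only [Unitary.conjStarAlgAut_star_apply, star_eq_conjTranspose,
      conjTranspose_eq_transpose_of_trivial] at h
    simpa [U, Matrix.mul_assoc] using h
  calc ∑ i, |Z i i| ≤ ∑ k, √(((Z * U)ᵀ * (Z * U)) k k) :=
        sum_abs_diag_le_sum_sqrt (by rw [Matrix.mul_assoc, hU', Matrix.mul_one]) hU
    _ = traceNorm Z := by
        rw [hdiag, traceNorm, svalsFin, sum_sortedDesc]
        simp

theorem frobInner_diagonal (w : Fin N → ℝ) (B : Matrix (Fin N) (Fin N) ℝ) :
    frobInner (diagonal w) B = ∑ i, w i * B i i := by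
  simp [frobInner, diagonal_apply, ite_mul]

theorem abs_frobInner_diagonal_le {w : Fin N → ℝ} {c : ℝ} (hc : 0 ≤ c) (hw : ∀ i, |w i| ≤ c)
    (Z : Matrix (Fin N) (Fin N) ℝ) : |frobInner (diagonal w) Z| ≤ c * traceNorm Z :=
  calc |frobInner (diagonal w) Z| ≤ ∑ i, |w i| * |Z i i| := by
        rw [frobInner_diagonal]
        exact (Finset.abs_sum_le_sum_abs _ _).trans_eq (by simp only [abs_mul])
    _ ≤ ∑ i, c * |Z i i| := Finset.sum_le_sum fun i _ => by gcongr; exact hw i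
    _ ≤ c * traceNorm Z := by
        rw [← Finset.mul_sum]
        exact mul_le_mul_of_nonneg_left (sum_abs_diag_le_traceNorm Z) hc

end DiagonalDuality

section StepDiagonal

def stepVec (N R : ℕ) (v₁ v₂ : ℝ) : Fin N → ℝ :=
  fun i => if (i : ℕ) < R then v₁ else if (i : ℕ) = R then v₂ else 0

variable {N R : ℕ}

theorem diagonal_stepVec_add (v₁ v₂ w₁ w₂ : ℝ) :
    diagonal (stepVec N R v₁ v₂) + diagonal (stepVec N R w₁ w₂) =
      diagonal (stepVec N R (v₁ + w₁) (v₂ + w₂)) := by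
  rw [diagonal_add]; congr; funext i; unfold stepVec; split_ifs <;> ring

theorem diagonal_stepVec_sub (v₁ v₂ w₁ w₂ : ℝ) :
    diagonal (stepVec N R v₁ v₂) - diagonal (stepVec N R w₁ w₂) =
      diagonal (stepVec N R (v₁ - w₁) (v₂ - w₂)) := by
  rw [diagonal_sub]; congr; funext i; unfold stepVec; split_ifs <;> ring

theorem smul_diagonal_stepVec (c v₁ v₂ : ℝ) :
    c • diagonal (stepVec N R v₁ v₂) = diagonal (stepVec N R (c * v₁) (c * v₂)) := by
  rw [← diagonal_smul]; congr; funext i; simp only [Pi.smul_apply, smul_eq_mul, stepVec]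
  split_ifs <;> ring

theorem sum_stepVec (hR : R < N) (v₁ v₂ : ℝ) : ∑ i, stepVec N R v₁ v₂ i = R * v₁ + v₂ := by
  unfold stepVec
  rw [Fin.sum_univ_eq_sum_range (fun k => if k < R then v₁ else if k = R then v₂ else 0),
    ← Finset.sum_range_add_sum_Ico _ hR, Finset.sum_range_succ,
    Finset.sum_congr rfl fun k hk => if_pos (Finset.mem_range.mp hk),
    Finset.sum_eq_zero (s := Finset.Ico (R + 1) N) fun k hk => by
      rw [if_neg, if_neg] <;> grind]
  simp

theorem frobInner_diagonal_stepVec (hR : R < N) (v₁ v₂ w₁ w₂ : ℝ) :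
    frobInner (diagonal (stepVec N R v₁ v₂)) (diagonal (stepVec N R w₁ w₂)) =
      R * (v₁ * w₁) + v₂ * w₂ := by
  rw [frobInner_diagonal, ← sum_stepVec hR]
  refine Finset.sum_congr rfl fun i _ => ?_
  simp only [diagonal_apply_eq, stepVec]
  split_ifs <;> ring

theorem frobNorm_diagonal_stepVec (hR : R < N) (v₁ v₂ : ℝ) :
    frobNorm (diagonal (stepVec N R v₁ v₂)) = √(R * v₁ ^ 2 + v₂ ^ 2) := by
  rw [← Real.sqrt_sq (frobNorm_nonneg _), ← frobInner_self, frobInner_diagonal_stepVec hR,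
    sq, sq]

theorem frobNorm_diagonal_stepVec_div_sub (hR0 : 0 < R) (hR : R < N) (s t : ℝ) :
    frobNorm (diagonal (stepVec N R (s / R) 0) - diagonal (stepVec N R (t / R) 0)) =
      |s - t| / √R := by
  have hsq : (R : ℝ) * (s / R - t / R) ^ 2 + (0 - 0) ^ 2 = (s - t) ^ 2 / R := by
    field_simp [(Nat.cast_pos.mpr hR0).ne']; ring
  rw [diagonal_stepVec_sub, frobNorm_diagonal_stepVec hR, hsq, Real.sqrt_div' _ R.cast_nonneg,
    Real.sqrt_sq_eq_abs]

theorem svalsFin_diagonal_stepVec {v₁ v₂ : ℝ} (h₂ : 0 ≤ v₂) (h : v₂ ≤ v₁) :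
    svalsFin (diagonal (stepVec N R v₁ v₂)) = stepVec N R v₁ v₂ := by
  have habs : (fun i => |stepVec N R v₁ v₂ i|) = stepVec N R v₁ v₂ := by
    funext i; unfold stepVec; split_ifs <;> simp [abs_of_nonneg, h₂, h₂.trans h]
  have hanti : Antitone (stepVec N R v₁ v₂) := fun i j hij => by
    have : (i : ℕ) ≤ j := hij
    unfold stepVec; split_ifs <;> first | rfl | omega | linarith
  rw [svalsFin_diagonal (by rw [habs]; exact hanti), habs]

theorem traceNorm_diagonal_stepVec (hR : R < N) {v₁ v₂ : ℝ} (h₂ : 0 ≤ v₂) (h : v₂ ≤ v₁) :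
    traceNorm (diagonal (stepVec N R v₁ v₂)) = R * v₁ + v₂ := by
  rw [traceNorm, svalsFin_diagonal_stepVec h₂ h, sum_stepVec hR]

theorem traceNorm_diagonal_stepVec_div (hR0 : 0 < R) (hR : R < N) {t : ℝ} (ht : 0 ≤ t) :
    traceNorm (diagonal (stepVec N R (t / R) 0)) = t := by
  rw [traceNorm_diagonal_stepVec hR le_rfl (by positivity), add_zero]
  field_simp

theorem rank_diagonal_stepVec (hR : R < N) {v₁ v₂ : ℝ} (h₁ : v₁ ≠ 0) (h₂ : v₂ ≠ 0) :
    (diagonal (stepVec N R v₁ v₂)).rank = R + 1 := by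
  rw [rank_diagonal]
  refine (Fintype.card_congr ?_).trans (Fintype.card_fin_lt_of_le (m := R + 1) hR)
  exact Equiv.subtypeEquivRight fun i => by
    unfold stepVec; split_ifs <;> simp_all <;> omega

theorem rank_diagonal_stepVec_zero (hR : R < N) {v₁ : ℝ} (h₁ : v₁ ≠ 0) :
    (diagonal (stepVec N R v₁ 0)).rank = R := by
  rw [rank_diagonal]
  refine (Fintype.card_congr ?_).trans (Fintype.card_fin_lt_of_le hR.le)
  exact Equiv.subtypeEquivRight fun i => by
    unfold stepVec; split_ifs <;> simp_all

theorem svalI_diagonal_stepVec_self_zero (hR0 : 0 < R) (hR : R < N) {v : ℝ} (hv : 0 ≤ v) :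
    svalI (diagonal (stepVec N R v v)) 0 = v := by
  simp [svalI, svalsFin_diagonal_stepVec hv le_rfl, stepVec, hR0, hR0.trans hR]

theorem svalI_diagonal_stepVec_self_succ {v : ℝ} (hv : 0 ≤ v) :
    svalI (diagonal (stepVec N R v v)) (R + 1) = 0 := by
  simp [svalI, svalsFin_diagonal_stepVec hv le_rfl, stepVec]

theorem multTop_diagonal_stepVec_self (hR0 : 0 < R) (hR : R < N) {v : ℝ} (hv : 0 < v) :
    multTop (diagonal (stepVec N R v v)) = R + 1 := by
  rw [multTop, svalI_diagonal_stepVec_self_zero hR0 hR hv.le,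
    svalsFin_diagonal_stepVec hv.le le_rfl, Nat.card_eq_fintype_card]
  refine (Fintype.card_congr ?_).trans (Fintype.card_fin_lt_of_le (m := R + 1) hR)
  exact Equiv.subtypeEquivRight fun i => by
    unfold stepVec; split_ifs <;> simp [hv.ne] <;> omega

theorem frobInner_diagonal_stepVec_self_le {v : ℝ} (hv : 0 ≤ v)
    (Z : Matrix (Fin N) (Fin N) ℝ) :
    frobInner (diagonal (stepVec N R v v)) Z ≤ v * traceNorm Z :=
  (le_abs_self _).trans <| abs_frobInner_diagonal_le hv (fun i => by
    unfold stepVec; split_ifs <;> simp [abs_of_nonneg hv, hv]) Z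

theorem projTraceBall_diagonal_stepVec_add (hR : R < N) {τ c p₁ p₂ : ℝ} (hc : 0 ≤ c)
    (hp₂ : 0 ≤ p₂) (hp : p₂ ≤ p₁) (hP : R * p₁ + p₂ ≤ τ) (hcompl : c = 0 ∨ R * p₁ + p₂ = τ) :
    projTraceBall τ (diagonal (stepVec N R (p₁ + c) (p₂ + c))) =
      diagonal (stepVec N R p₁ p₂) := by
  have hcP := frobInner_diagonal_stepVec hR c c p₁ p₂
  refine projTraceBall_eq_of_frobInner_nonneg
    ((traceNorm_diagonal_stepVec hR hp₂ hp).trans_le hP) fun Z hZ => ?_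
  have hcZ := (frobInner_diagonal_stepVec_self_le (R := R) hc Z).trans
    (mul_le_mul_of_nonneg_left hZ hc)
  rw [diagonal_stepVec_sub, add_sub_cancel_left, add_sub_cancel_left, frobInner_sub_right]
  rcases hcompl with rfl | h <;> nlinarith

theorem frobInner_neg_diagonal_stepVec_le (hR0 : 0 < R) (hR : R < N) {v : ℝ} (hv : 0 ≤ v)
    {Z : Matrix (Fin N) (Fin N) ℝ} (hZ : traceNorm Z ≤ 1) :
    frobInner (-diagonal (stepVec N R v v)) (diagonal (stepVec N R (1 / R) 0)) ≤
      frobInner (-diagonal (stepVec N R v v)) Z := by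
  have hRv : (R : ℝ) * (v * (1 / R)) + v * 0 = v := by
    rw [mul_zero, add_zero]; field_simp [(Nat.cast_pos.mpr hR0).ne']
  rw [frobInner_neg_left, frobInner_neg_left, frobInner_diagonal_stepVec hR, neg_le_neg_iff,
    hRv]
  nlinarith [frobInner_diagonal_stepVec_self_le (R := R) hv Z]

theorem rank_projTraceBall_diagonal_stepVec (hR : R < N) {τ q₁ q₂ : ℝ} (hq₂ : 0 < q₂)
    (hq : q₂ ≤ q₁) (hgap : R * (q₁ - q₂) < τ) :
    (projTraceBall τ (diagonal (stepVec N R q₁ q₂))).rank = R + 1 := by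
  have hR1 : (0 : ℝ) < R + 1 := by positivity
  set c := max 0 ((R * q₁ + q₂ - τ) / (R + 1)) with hcdef
  have hc : 0 ≤ c := le_max_left _ _
  have hcq : c < q₂ := max_lt hq₂ <| by rw [div_lt_iff₀ hR1]; linarith
  have hcτ : R * (q₁ - c) + (q₂ - c) ≤ τ := by
    have : (R * q₁ + q₂ - τ) / (R + 1) ≤ c := le_max_right _ _
    rw [div_le_iff₀ hR1] at this
    linarith
  have hcompl : c = 0 ∨ R * (q₁ - c) + (q₂ - c) = τ := by
    rcases max_choice 0 ((R * q₁ + q₂ - τ) / (R + 1)) with h | h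
    · exact Or.inl h
    · right; rw [← hcdef] at h; rw [h]; field_simp; ring
  have hproj := projTraceBall_diagonal_stepVec_add hR hc (sub_pos.mpr hcq).le
    (sub_le_sub_right hq c) hcτ hcompl
  rw [sub_add_cancel, sub_add_cancel] at hproj
  rw [hproj, rank_diagonal_stepVec hR (by linarith) (by linarith)]

end StepDiagonal

/-- For `n` and `r ∈ {2,…,n−1}`, for all sufficiently small
`a ∈ (0,1)` and every `σ > 0` there is a convex `1`-smooth `f : ℝ^{n×n} → ℝ`
with a rank-`r` minimizer `X*` over the unit trace-norm ball such that
`#σ₁(∇f(X*)) = r+1` and `σ₁(∇f(X*)) − σ_{r+2}(∇f(X*)) = σ`, and a rank-`r`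
matrix `X_a` with `‖X_a‖_* ≤ 1`, `‖X_a − X*‖_F ≤ √2·a`, and `rank(𝒢_η(X_a)) = r+1`
for every `η ∈ (0,1]`. -/
theorem stmt4 (n : ℕ) (r : ℕ) (hr2 : 2 ≤ r) (hrn : r < n) :
    ∃ a0 : ℝ, 0 < a0 ∧ a0 < 1 ∧ ∀ a : ℝ, 0 < a → a ≤ a0 → ∀ σ : ℝ, 0 < σ →
    ∃ (f : Matrix (Fin n) (Fin n) ℝ → ℝ)
      (gradf : Matrix (Fin n) (Fin n) ℝ → Matrix (Fin n) (Fin n) ℝ),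
      ConvexOn ℝ Set.univ f ∧
      (∀ X, HasFDerivAt f (frobCLM (gradf X)) X) ∧
      (∀ X Y, frobNorm (gradf X - gradf Y) ≤ 1 * frobNorm (X - Y)) ∧
      ∃ Xstar Xa : Matrix (Fin n) (Fin n) ℝ,
        traceNorm Xstar ≤ 1 ∧ (∀ Z, traceNorm Z ≤ 1 → f Xstar ≤ f Z) ∧
        Xstar.rank = r ∧
        multTop (gradf Xstar) = r + 1 ∧
        svalI (gradf Xstar) 0 - svalI (gradf Xstar) (r + 1) = σ ∧
        traceNorm Xa ≤ 1 ∧ Xa.rank = r ∧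
        frobNorm (Xa - Xstar) ≤ Real.sqrt 2 * a ∧
        (∀ η : ℝ, 0 < η → η ≤ 1 →
          (projTraceBall 1 (Xa - η • gradf Xa)).rank = r + 1) := by
  refine ⟨1 / 2, by norm_num, by norm_num, fun a ha ha0 σ hσ => ?_⟩
  have hr0 : 0 < r := by omega
  have hr : (0 : ℝ) < r := by exact_mod_cast hr0
  have ha1 : 0 < 1 - a := by linarith
  set S := diagonal (stepVec n r σ σ)
  refine ⟨frobCLM (-S), fun _ => -S, (frobCLM (-S)).toLinearMap.convexOn convex_univ,
    fun X => (frobCLM (-S)).hasFDerivAt,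
    fun X Y => by simpa [frobNorm_eq_zero.mpr] using frobNorm_nonneg (X - Y),
    diagonal (stepVec n r (1 / r) 0), diagonal (stepVec n r ((1 - a) / r) 0),
    ?_, fun Z hZ => ?_, ?_, ?_, ?_, ?_, ?_, ?_, fun η hη _ => ?_⟩
  · exact (traceNorm_diagonal_stepVec_div hr0 hrn zero_le_one).le
  · exact frobInner_neg_diagonal_stepVec_le hr0 hrn hσ.le hZ
  · exact rank_diagonal_stepVec_zero hrn (by positivity)
  · rw [multTop_neg, multTop_diagonal_stepVec_self hr0 hrn hσ]
  · rw [svalI_neg, svalI_neg, svalI_diagonal_stepVec_self_zero hr0 hrn hσ.le,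
      svalI_diagonal_stepVec_self_succ hσ.le, sub_zero]
  · exact (traceNorm_diagonal_stepVec_div hr0 hrn ha1.le).trans_le (by linarith)
  · exact rank_diagonal_stepVec_zero hrn (by positivity)
  · rw [frobNorm_diagonal_stepVec_div_sub hr0 hrn, sub_sub_cancel_left, abs_neg, abs_of_pos ha]
    calc a / √r ≤ a := div_le_self ha.le (Real.one_le_sqrt.mpr (Nat.one_le_cast.mpr hr0))
      _ ≤ √2 * a := le_mul_of_one_le_left ha.le (Real.one_le_sqrt.mpr one_le_two)
  · have hY : diagonal (stepVec n r ((1 - a) / r) 0) - η • -S =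
        diagonal (stepVec n r ((1 - a) / r + η * σ) (η * σ)) := by
      rw [smul_neg, sub_neg_eq_add, smul_diagonal_stepVec, diagonal_stepVec_add, zero_add]
    rw [hY]
    refine rank_projTraceBall_diagonal_stepVec hrn (by positivity)
      (by linarith [div_pos ha1 hr]) ?_
    rw [add_sub_cancel_right, mul_div_cancel₀ _ hr.ne']
    linarith
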